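/- arXiv:2311.05313 — 12 statements merged into one kernel-verified Lean document; each statement's English description precedes it below -/
import Mathlib

section
/- Let f be L-smooth and convex on a compact convex set P of diameter D, and let (x_t) be the iterates of the Frank-Wolfe algorithm with step-size γ_t = 2/(t+2), i.e., x_{t+1} = (1-γ_t)x_t + γ_t v_t where v_t ∈ argmin_{v∈P}⟪∇f(x_t), v⟫, starting from any x_0 ∈ P. Then for all t ≥ 1, f(x_t) - min_{x∈P} f(x) ≤ 2LD²/(t+2). -/
open scoped RealInnerProductSpace

/-!
Smoothness at `x_t`, applied along the step `x_{t+1} - x_t = γ_t (v_t - x_t)`, together with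
`⟪∇f(x_t), v_t - x_t⟫ ≤ ⟪∇f(x_t), x* - x_t⟫ ≤ f(x*) - f(x_t)` (choice of `v_t`, then convexity)
gives the recursion `h_{t+1} ≤ (1 - γ_t) h_t + γ_t² L D² / 2` for the primal gap `h_t`.
With `γ_t = 2/(t+2)` this recursion forces `h_t ≤ 2 L D² / (t+2)` by induction from `t = 1`,
using `(t+1)(t+3) ≤ (t+2)²`.
-/

lemma two_div_nat_add_two_mem_Icc (t : ℕ) : 2 / ((t : ℝ) + 2) ∈ Set.Icc (0 : ℝ) 1 :=
  ⟨by positivity, (div_le_one (by positivity)).2 (by linarith [(t.cast_nonneg : (0 : ℝ) ≤ t)])⟩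

section FrankWolfe

variable {E : Type*} [NormedAddCommGroup E] [InnerProductSpace ℝ E] {P : Set E}

lemma frankWolfe_iterate_mem (hP : Convex ℝ P) {x v : ℕ → E} {γ : ℕ → ℝ}
    (hγ : ∀ t, γ t ∈ Set.Icc (0 : ℝ) 1) (hx0 : x 0 ∈ P) (hv : ∀ t, v t ∈ P)
    (hstep : ∀ t, x (t + 1) = (1 - γ t) • x t + γ t • v t) (t : ℕ) : x t ∈ P := by
  induction t with
  | zero => exact hx0
  | succ t ih =>
    rw [hstep t]
    exact hP ih (hv t) (sub_nonneg.2 (hγ t).2) (hγ t).1 (sub_add_cancel 1 (γ t))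

lemma frankWolfe_step_gap_le (hP : Convex ℝ P) {f : E → ℝ} {g : E → E} {L D γ : ℝ}
    (hL : 0 ≤ L) (hD : ∀ a ∈ P, ∀ b ∈ P, ‖a - b‖ ≤ D)
    (hconv : ∀ x ∈ P, ∀ y ∈ P, f y - f x ≥ ⟪g x, y - x⟫)
    (hsmooth : ∀ x ∈ P, ∀ y ∈ P, f y - f x ≤ ⟪g x, y - x⟫ + L / 2 * ‖y - x‖ ^ 2)
    {x v xstar : E} (hx : x ∈ P) (hv : v ∈ P) (hxstar : xstar ∈ P)
    (hvmin : IsMinOn (fun z => ⟪g x, z⟫) P v) (hγ : γ ∈ Set.Icc (0 : ℝ) 1) :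
    f ((1 - γ) • x + γ • v) - f xstar ≤ (1 - γ) * (f x - f xstar) + L * D ^ 2 / 2 * γ ^ 2 := by
  have hy : (1 - γ) • x + γ • v ∈ P :=
    hP hx hv (sub_nonneg.2 hγ.2) hγ.1 (sub_add_cancel 1 γ)
  have hdir : (1 - γ) • x + γ • v - x = γ • (v - x) := by module
  have hdescent := hsmooth x hx _ hy
  rw [hdir, real_inner_smul_right, norm_smul, Real.norm_of_nonneg hγ.1, mul_pow] at hdescent
  have hgap : ⟪g x, v - x⟫ ≤ f xstar - f x := by
    have hlin : ⟪g x, v⟫ ≤ ⟪g x, xstar⟫ := hvmin hxstar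
    have := hconv x hx xstar hxstar
    rw [inner_sub_right] at this ⊢
    linarith
  have hdiam : ‖v - x‖ ^ 2 ≤ D ^ 2 :=
    pow_le_pow_left₀ (norm_nonneg _) (hD v hv x hx) 2
  nlinarith [mul_le_mul_of_nonneg_left hgap hγ.1, mul_le_mul_of_nonneg_left hdiam
    (mul_nonneg (div_nonneg hL zero_le_two) (sq_nonneg γ))]

end FrankWolfe

lemma le_of_frankWolfe_recursion {h : ℕ → ℝ} {C : ℝ} (hC : 0 ≤ C)
    (hrec : ∀ t : ℕ, h (t + 1) ≤
      (1 - 2 / ((t : ℝ) + 2)) * h t + C / 2 * (2 / ((t : ℝ) + 2)) ^ 2) :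
    ∀ t : ℕ, 1 ≤ t → h t ≤ 2 * C / ((t : ℝ) + 2) := by
  intro t ht
  induction t, ht using Nat.le_induction with
  | base =>
    have := hrec 0
    norm_num at this ⊢
    linarith
  | succ t ht ih =>
    have ht2 : (0 : ℝ) < t + 2 := by positivity
    have hcoef : 0 ≤ 1 - 2 / ((t : ℝ) + 2) := sub_nonneg.2 (two_div_nat_add_two_mem_Icc t).2
    calc h (t + 1)
        ≤ (1 - 2 / ((t : ℝ) + 2)) * (2 * C / ((t : ℝ) + 2)) + C / 2 * (2 / ((t : ℝ) + 2)) ^ 2 :=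
          (hrec t).trans (by gcongr)
      _ = 2 * C * ((t : ℝ) + 1) / ((t : ℝ) + 2) ^ 2 := by field_simp; ring
      _ ≤ 2 * C / (((t + 1 : ℕ) : ℝ) + 2) := by
          rw [div_le_div_iff₀ (by positivity) (by positivity)]
          push_cast
          nlinarith

theorem fw_primal_convergence_general {n : ℕ} (P : Set (EuclideanSpace ℝ (Fin n)))
    (hPconv : Convex ℝ P)
    (L D : ℝ) (hL : 0 ≤ L)
    (hD : ∀ a ∈ P, ∀ b ∈ P, ‖a - b‖ ≤ D)
    (f : EuclideanSpace ℝ (Fin n) → ℝ) (g : EuclideanSpace ℝ (Fin n) → EuclideanSpace ℝ (Fin n))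
    (hconv : ∀ x ∈ P, ∀ y ∈ P, f y - f x ≥ ⟪g x, y - x⟫)
    (hsmooth : ∀ x ∈ P, ∀ y ∈ P, f y - f x ≤ ⟪g x, y - x⟫ + L / 2 * ‖y - x‖ ^ 2)
    (x v : ℕ → EuclideanSpace ℝ (Fin n)) (hx0 : x 0 ∈ P)
    (hvP : ∀ t, v t ∈ P)
    (hvmin : ∀ t, IsMinOn (fun z => ⟪g (x t), z⟫) P (v t))
    (hstep : ∀ t : ℕ, x (t + 1) = (1 - 2 / ((t : ℝ) + 2)) • x t + (2 / ((t : ℝ) + 2)) • v t)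
    (xstar : EuclideanSpace ℝ (Fin n)) (hxstar : xstar ∈ P) :
    ∀ t : ℕ, 1 ≤ t → f (x t) - f xstar ≤ 2 * L * D ^ 2 / ((t : ℝ) + 2) := by
  have hxP : ∀ t, x t ∈ P :=
    frankWolfe_iterate_mem hPconv two_div_nat_add_two_mem_Icc hx0 hvP hstep
  have hrec : ∀ t : ℕ, f (x (t + 1)) - f xstar ≤
      (1 - 2 / ((t : ℝ) + 2)) * (f (x t) - f xstar) + L * D ^ 2 / 2 * (2 / ((t : ℝ) + 2)) ^ 2 := by
    intro t
    rw [hstep t]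
    exact frankWolfe_step_gap_le hPconv hL hD hconv hsmooth (hxP t) (hvP t) hxstar (hvmin t)
      (two_div_nat_add_two_mem_Icc t)
  simpa only [mul_assoc] using le_of_frankWolfe_recursion (by positivity) hrec

/-- **Primal convergence of the Frank-Wolfe algorithm.** With the open loop step-size
`γ_t = 2/(t+2)`, for an `L`-smooth convex `f` over a compact convex `P` of diameter `D`,
the iterates satisfy `f (x_t) - f x* ≤ 2 L D² / (t+2)` for all `t ≥ 1`. -/
theorem fw_primal_convergence {n : ℕ} (P : Set (EuclideanSpace ℝ (Fin n)))
    (hPne : P.Nonempty) (hPc : IsCompact P) (hPconv : Convex ℝ P)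
    (L D : ℝ) (hL : 0 ≤ L)
    (hD : ∀ a ∈ P, ∀ b ∈ P, ‖a - b‖ ≤ D)
    (f : EuclideanSpace ℝ (Fin n) → ℝ) (g : EuclideanSpace ℝ (Fin n) → EuclideanSpace ℝ (Fin n))
    (hdiff : ∀ x ∈ P, HasGradientAt f (g x) x)
    (hconv : ∀ x ∈ P, ∀ y ∈ P, f y - f x ≥ ⟪g x, y - x⟫)
    (hsmooth : ∀ x ∈ P, ∀ y ∈ P, f y - f x ≤ ⟪g x, y - x⟫ + L / 2 * ‖y - x‖ ^ 2)
    (x v : ℕ → EuclideanSpace ℝ (Fin n)) (hx0 : x 0 ∈ P)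
    (hvP : ∀ t, v t ∈ P)
    (hvmin : ∀ t, IsMinOn (fun z => ⟪g (x t), z⟫) P (v t))
    (hstep : ∀ t : ℕ, x (t + 1) = (1 - 2 / ((t : ℝ) + 2)) • x t + (2 / ((t : ℝ) + 2)) • v t)
    (xstar : EuclideanSpace ℝ (Fin n)) (hxstar : xstar ∈ P) (hmin : IsMinOn f P xstar) :
    ∀ t : ℕ, 1 ≤ t → f (x t) - f xstar ≤ 2 * L * D ^ 2 / ((t : ℝ) + 2) :=
  fw_primal_convergence_general P hPconv L D hL hD f g hconv hsmooth x v hx0 hvP hvmin hstep xstar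
    hxstar
end

section
/- Suppose a sequence of nonnegative reals h_t satisfies h_{t+1} ≤ (1 - γ_t)h_t + γ_t²·C with γ_t = 2/(t+2) and C = LD²/2. Then h_t ≤ 2LD²/(t+2) for all t ≥ 1. -/
/-! With `γ_t = 2/(t+2)`, the bound `4C/(t+2)` is an invariant of the recursion: feeding it in
gives `4C(t+1)/(t+2)²`, which is at most `4C/(t+3)` because `(t+1)(t+3) ≤ (t+2)²`. It starts at
`t = 1` since `γ_0 = 1` makes `h_1 ≤ C`. -/

theorem contraction_step_le {C t : ℝ} (hC : 0 ≤ C) (ht : 0 ≤ t) :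
    (1 - 2 / (t + 2)) * (4 * C / (t + 2)) + (2 / (t + 2)) ^ 2 * C ≤ 4 * C / (t + 3) := by
  have hsimp : (1 - 2 / (t + 2)) * (4 * C / (t + 2)) + (2 / (t + 2)) ^ 2 * C
      = 4 * C * (t + 1) / (t + 2) ^ 2 := by
    field_simp
    ring
  rw [hsimp, div_le_div_iff₀ (by positivity) (by positivity)]
  nlinarith [mul_nonneg hC (sq_nonneg (t + 2))]

theorem le_of_contraction_recursion {h : ℕ → ℝ} {C : ℝ} (hC : 0 ≤ C)
    (hrec : ∀ t : ℕ, h (t + 1) ≤ (1 - 2 / ((t : ℝ) + 2)) * h t + (2 / ((t : ℝ) + 2)) ^ 2 * C) :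
    ∀ t : ℕ, 1 ≤ t → h t ≤ 4 * C / ((t : ℝ) + 2) := by
  intro t ht
  induction t, ht using Nat.le_induction with
  | base =>
    have h1 : h 1 ≤ C := by simpa using hrec 0
    calc h 1 ≤ C := h1
      _ ≤ 4 * C / ((1 : ℕ) + 2 : ℝ) := by norm_num; linarith
  | succ n _ ih =>
    have hγ : 0 ≤ 1 - 2 / ((n : ℝ) + 2) := by
      rw [sub_nonneg, div_le_one (by positivity)]
      linarith [n.cast_nonneg (α := ℝ)]
    calc h (n + 1) ≤ (1 - 2 / ((n : ℝ) + 2)) * h n + (2 / ((n : ℝ) + 2)) ^ 2 * C := hrec n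
      _ ≤ (1 - 2 / ((n : ℝ) + 2)) * (4 * C / ((n : ℝ) + 2)) + (2 / ((n : ℝ) + 2)) ^ 2 * C := by
        gcongr
      _ ≤ 4 * C / ((n : ℝ) + 3) := contraction_step_le hC n.cast_nonneg
      _ = 4 * C / (((n + 1 : ℕ) : ℝ) + 2) := by push_cast; ring

theorem fw_contraction_recursion_general (h : ℕ → ℝ) (L D : ℝ) (hL : 0 ≤ L)
    (hrec : ∀ t : ℕ,
      h (t + 1) ≤ (1 - 2 / ((t : ℝ) + 2)) * h t + (2 / ((t : ℝ) + 2)) ^ 2 * (L * D ^ 2 / 2)) :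
    ∀ t : ℕ, 1 ≤ t → h t ≤ 2 * L * D ^ 2 / ((t : ℝ) + 2) := by
  intro t ht
  have hbound := le_of_contraction_recursion (by positivity) hrec t ht
  rwa [show 4 * (L * D ^ 2 / 2) = 2 * L * D ^ 2 by ring] at hbound

/-- **Contraction recursion.** If `h_{t+1} ≤ (1 - γ_t) h_t + γ_t² C` with `γ_t = 2/(t+2)`
and `C = L D² / 2`, `h_t ≥ 0`, `L, D ≥ 0`, then `h_t ≤ 2 L D² / (t+2)` for all `t ≥ 1`. -/
theorem fw_contraction_recursion (h : ℕ → ℝ) (L D : ℝ) (hL : 0 ≤ L) (hD : 0 ≤ D)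
    (hnn : ∀ t, 0 ≤ h t)
    (hrec : ∀ t : ℕ,
      h (t + 1) ≤ (1 - 2 / ((t : ℝ) + 2)) * h t + (2 / ((t : ℝ) + 2)) ^ 2 * (L * D ^ 2 / 2)) :
    ∀ t : ℕ, 1 ≤ t → h t ≤ 2 * L * D ^ 2 / ((t : ℝ) + 2) :=
  fw_contraction_recursion_general h L D hL hrec
end

section
/- Let f be L-smooth (not necessarily convex) on a compact convex set P of diameter D, let T ∈ ℕ, and run the Frank-Wolfe algorithm with constant step-size γ = 1/√(T+1). Then the minimum Frank-Wolfe gap satisfies min_{0≤t≤T} max_{v∈P}⟪∇f(x_t), x_t - v⟫ ≤ max{2h_0, LD²}/√(T+1), where h_0 = f(x_0) - min_{x∈P} f(x). -/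
open scoped RealInnerProductSpace BigOperators

/-!
By `L`-smoothness, one Frank-Wolfe step of length `γ` decreases `f` by at least `γ` times the
Frank-Wolfe gap `⟪∇f(xₜ), xₜ - vₜ⟫`, up to a curvature error `γ² L D² / 2`. Telescoping over
`N` steps and using `f ≥ f x⋆` on `P` bounds the average gap, hence the smallest one, by
`h₀ / (N γ) + γ L D² / 2`; for `N = T + 1` and `γ = 1/√(T+1)` both terms are `O(1/√(T+1))`.
-/

open Finset

theorem sum_mul_le_of_le_sub_mul_add {u a : ℕ → ℝ} {γ c : ℝ}
    (h : ∀ t, u (t + 1) ≤ u t - γ * a t + c) (N : ℕ) :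
    γ * ∑ t ∈ range N, a t ≤ u 0 - u N + N * c := by
  calc γ * ∑ t ∈ range N, a t = ∑ t ∈ range N, γ * a t := mul_sum _ _ _
    _ ≤ ∑ t ∈ range N, (u t - u (t + 1) + c) := sum_le_sum fun t _ => by linarith [h t]
    _ = u 0 - u N + N * c := by
      rw [sum_add_distrib, sum_range_sub', sum_const, card_range, nsmul_eq_mul]

theorem exists_lt_le_sum_range_div {a : ℕ → ℝ} {N : ℕ} (hN : 0 < N) :
    ∃ t < N, a t ≤ (∑ s ∈ range N, a s) / N := by
  obtain ⟨t, ht, hle⟩ := exists_le_of_sum_le (nonempty_range_iff.mpr hN.ne')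
    (f := a) (g := fun _ => (∑ s ∈ range N, a s) / N) (by
      rw [sum_const, card_range, nsmul_eq_mul, mul_div_cancel₀ _ (by positivity)])
  exact ⟨t, mem_range.mp ht, hle⟩

theorem mul_sq_le_max_mul_sq_zero {L a D : ℝ} (ha : 0 ≤ a) (haD : a ≤ D) :
    L * a ^ 2 ≤ max (L * D ^ 2) 0 := by
  rcases le_total L 0 with hL | hL
  · exact (mul_nonpos_of_nonpos_of_nonneg hL (sq_nonneg a)).trans (le_max_right _ _)
  · exact (mul_le_mul_of_nonneg_left (pow_le_pow_left₀ ha haD 2) hL).trans (le_max_left _ _)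

section FrankWolfe

variable {E : Type*} [NormedAddCommGroup E] [InnerProductSpace ℝ E]

theorem Convex.iterate_mem_of_step {P : Set E} (hP : Convex ℝ P) {γ : ℝ} (hγ0 : 0 ≤ γ)
    (hγ1 : γ ≤ 1) {x v : ℕ → E} (hx0 : x 0 ∈ P) (hv : ∀ t, v t ∈ P)
    (hstep : ∀ t, x (t + 1) = (1 - γ) • x t + γ • v t) (t : ℕ) : x t ∈ P := by
  induction t with
  | zero => exact hx0
  | succ t ih => exact hstep t ▸ hP ih (hv t) (by linarith) hγ0 (by ring)

theorem frankWolfe_step_le {P : Set E} {f : E → ℝ} {g : E → E} {L D : ℝ}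
    (hD : ∀ a ∈ P, ∀ b ∈ P, ‖a - b‖ ≤ D)
    (hsmooth : ∀ x ∈ P, ∀ y ∈ P, f y - f x ≤ ⟪g x, y - x⟫ + L / 2 * ‖y - x‖ ^ 2)
    {x v : E} {γ : ℝ} (hx : x ∈ P) (hv : v ∈ P) (hy : (1 - γ) • x + γ • v ∈ P) :
    f ((1 - γ) • x + γ • v) ≤ f x - γ * ⟪g x, x - v⟫ + γ ^ 2 * (max (L * D ^ 2) 0 / 2) := by
  have hdiff : (1 - γ) • x + γ • v - x = γ • (v - x) := by module
  have hquad : L * ‖x - v‖ ^ 2 ≤ max (L * D ^ 2) 0 :=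
    mul_sq_le_max_mul_sq_zero (norm_nonneg _) (hD x hx v hv)
  have h := hsmooth x hx _ hy
  rw [hdiff, real_inner_smul_right, norm_smul, mul_pow, Real.norm_eq_abs, sq_abs,
    ← neg_sub x v, inner_neg_right, norm_neg] at h
  nlinarith [mul_le_mul_of_nonneg_left hquad (sq_nonneg γ)]

theorem frankWolfe_exists_gap_le {P : Set E} (hP : Convex ℝ P) {f : E → ℝ} {g : E → E}
    {L D : ℝ} (hD : ∀ a ∈ P, ∀ b ∈ P, ‖a - b‖ ≤ D)
    (hsmooth : ∀ x ∈ P, ∀ y ∈ P, f y - f x ≤ ⟪g x, y - x⟫ + L / 2 * ‖y - x‖ ^ 2)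
    {γ : ℝ} (hγ0 : 0 < γ) (hγ1 : γ ≤ 1) {x v : ℕ → E} (hx0 : x 0 ∈ P) (hv : ∀ t, v t ∈ P)
    (hvmin : ∀ t, IsMinOn (fun z => ⟪g (x t), z⟫) P (v t))
    (hstep : ∀ t, x (t + 1) = (1 - γ) • x t + γ • v t)
    {xstar : E} (hmin : IsMinOn f P xstar) {N : ℕ} (hN : 0 < N) :
    ∃ t < N, ∀ w ∈ P, ⟪g (x t), x t - w⟫ ≤
      (f (x 0) - f xstar) / (N * γ) + γ * (max (L * D ^ 2) 0 / 2) := by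
  set C := max (L * D ^ 2) 0 / 2
  have hxP := hP.iterate_mem_of_step hγ0.le hγ1 hx0 hv hstep
  have hdescent (t : ℕ) : f (x (t + 1)) ≤ f (x t) - γ * ⟪g (x t), x t - v t⟫ + γ ^ 2 * C :=
    hstep t ▸ frankWolfe_step_le hD hsmooth (hxP t) (hv t) (hstep t ▸ hxP (t + 1))
  have hsum := sum_mul_le_of_le_sub_mul_add (u := fun t => f (x t))
    (a := fun t => ⟪g (x t), x t - v t⟫) hdescent N
  have hlow : f xstar ≤ f (x N) := hmin (hxP N)
  obtain ⟨t, htN, ht⟩ := exists_lt_le_sum_range_div (a := fun t => ⟪g (x t), x t - v t⟫) hN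
  refine ⟨t, htN, fun w hw => ?_⟩
  have hgap : ⟪g (x t), x t - w⟫ ≤ ⟪g (x t), x t - v t⟫ := by
    have hvw : ⟪g (x t), v t⟫ ≤ ⟪g (x t), w⟫ := hvmin t hw
    simp only [inner_sub_right]
    linarith
  have hNγ : (0 : ℝ) < N * γ := by positivity
  have hbound : (∑ s ∈ range N, ⟪g (x s), x s - v s⟫) / N ≤
      (f (x 0) - f xstar) / (N * γ) + γ * C :=
    calc (∑ s ∈ range N, ⟪g (x s), x s - v s⟫) / N
        = γ * (∑ s ∈ range N, ⟪g (x s), x s - v s⟫) / (N * γ) := by field_simp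
      _ ≤ (f (x 0) - f xstar + N * (γ ^ 2 * C)) / (N * γ) := by gcongr; linarith
      _ = (f (x 0) - f xstar) / (N * γ) + γ * C := by field_simp
  linarith

end FrankWolfe

theorem fw_nonconvex_convergence_general {n : ℕ} (P : Set (EuclideanSpace ℝ (Fin n)))
    (hPconv : Convex ℝ P)
    (L D : ℝ) (hD : ∀ a ∈ P, ∀ b ∈ P, ‖a - b‖ ≤ D)
    (f : EuclideanSpace ℝ (Fin n) → ℝ) (g : EuclideanSpace ℝ (Fin n) → EuclideanSpace ℝ (Fin n))
    (hsmooth : ∀ x ∈ P, ∀ y ∈ P, f y - f x ≤ ⟪g x, y - x⟫ + L / 2 * ‖y - x‖ ^ 2)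
    (T : ℕ)
    (x v : ℕ → EuclideanSpace ℝ (Fin n)) (hx0 : x 0 ∈ P)
    (hvP : ∀ t, v t ∈ P)
    (hvmin : ∀ t, IsMinOn (fun z => ⟪g (x t), z⟫) P (v t))
    (hstep : ∀ t : ℕ, x (t + 1) =
      (1 - 1 / Real.sqrt ((T : ℝ) + 1)) • x t + (1 / Real.sqrt ((T : ℝ) + 1)) • v t)
    (xstar : EuclideanSpace ℝ (Fin n)) (hmin : IsMinOn f P xstar) :
    ∃ t ≤ T, ∀ w ∈ P,
      ⟪g (x t), x t - w⟫ ≤ max (2 * (f (x 0) - f xstar)) (L * D ^ 2) / Real.sqrt ((T : ℝ) + 1) := by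
  set s := Real.sqrt ((T : ℝ) + 1)
  have hs1 : 1 ≤ s := Real.one_le_sqrt.mpr (by simp)
  have hs0 : 0 < s := one_pos.trans_le hs1
  have hsq : ((T + 1 : ℕ) : ℝ) * (1 / s) = s := by
    have hs2 : s ^ 2 = T + 1 := Real.sq_sqrt (by positivity)
    rw [Nat.cast_succ, ← hs2]
    field_simp
  obtain ⟨t, htT, ht⟩ := frankWolfe_exists_gap_le hPconv hD hsmooth (by positivity)
    ((div_le_one hs0).mpr hs1) hx0 hvP hvmin hstep hmin (Nat.succ_pos T)
  refine ⟨t, Nat.lt_succ_iff.mp htT, fun w hw => (ht w hw).trans ?_⟩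
  rw [hsq, ← mul_div_right_comm, one_mul, ← add_div, div_le_div_iff_of_pos_right hs0]
  have hh0 : 0 ≤ f (x 0) - f xstar := sub_nonneg.mpr (hmin hx0)
  have hM := le_max_left (2 * (f (x 0) - f xstar)) (L * D ^ 2)
  have hC : max (L * D ^ 2) 0 ≤ max (2 * (f (x 0) - f xstar)) (L * D ^ 2) :=
    max_le (le_max_right _ _) (hh0.trans (by linarith))
  linarith

/-- **Convergence for nonconvex objectives.** With constant step `γ = 1/√(T+1)`, the
minimum Frank-Wolfe gap over `t = 0, …, T` is at most `max {2 h₀, L D²} / √(T+1)`,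
where `h₀ = f x₀ - min_P f`. -/
theorem fw_nonconvex_convergence {n : ℕ} (P : Set (EuclideanSpace ℝ (Fin n)))
    (hPne : P.Nonempty) (hPc : IsCompact P) (hPconv : Convex ℝ P)
    (L D : ℝ) (hD : ∀ a ∈ P, ∀ b ∈ P, ‖a - b‖ ≤ D)
    (f : EuclideanSpace ℝ (Fin n) → ℝ) (g : EuclideanSpace ℝ (Fin n) → EuclideanSpace ℝ (Fin n))
    (hdiff : ∀ x ∈ P, HasGradientAt f (g x) x)
    (hsmooth : ∀ x ∈ P, ∀ y ∈ P, f y - f x ≤ ⟪g x, y - x⟫ + L / 2 * ‖y - x‖ ^ 2)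
    (T : ℕ)
    (x v : ℕ → EuclideanSpace ℝ (Fin n)) (hx0 : x 0 ∈ P)
    (hvP : ∀ t, v t ∈ P)
    (hvmin : ∀ t, IsMinOn (fun z => ⟪g (x t), z⟫) P (v t))
    (hstep : ∀ t : ℕ, x (t + 1) =
      (1 - 1 / Real.sqrt ((T : ℝ) + 1)) • x t + (1 / Real.sqrt ((T : ℝ) + 1)) • v t)
    (xstar : EuclideanSpace ℝ (Fin n)) (hxstar : xstar ∈ P) (hmin : IsMinOn f P xstar) :
    ∃ t ≤ T, ∀ w ∈ P,
      ⟪g (x t), x t - w⟫ ≤ max (2 * (f (x 0) - f xstar)) (L * D ^ 2) / Real.sqrt ((T : ℝ) + 1) :=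
  fw_nonconvex_convergence_general P hPconv L D hD f g hsmooth T x v hx0 hvP hvmin hstep xstar hmin
end

section
/- Let f be L-smooth and convex on P, and let x_t, v_t ∈ P with ⟪∇f(x_t), x_t - v_t⟫ ≥ L‖x_t - v_t‖². Then for x_{t+1} = v_t (i.e., step-size γ = 1), f(x_t) - f(x_{t+1}) ≥ ⟪∇f(x_t), x_t - v_t⟫/2, and if v_t minimizes ⟪∇f(x_t), ·⟫ over P, then f(x_t) - f(x_{t+1}) ≥ (f(x_t) - min_P f)/2. -/
open scoped RealInnerProductSpace BigOperators

/-!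
With step size 1 the smoothness upper bound gives a decrease of at least
`⟪g, x - v⟫ - L/2 ‖x - v‖²`, which is at least half the Frank–Wolfe gap `⟪g, x - v⟫` in this
regime. By convexity the Frank–Wolfe gap dominates the primal gap `f x - min_P f`.
-/

section

variable {E : Type*} [NormedAddCommGroup E] [InnerProductSpace ℝ E]

theorem half_inner_le_sub_of_smooth_bound {f : E → ℝ} {g x y : E} {L : ℝ}
    (hsmooth : f y - f x ≤ ⟪g, y - x⟫ + L / 2 * ‖y - x‖ ^ 2)
    (hbig : L * ‖x - y‖ ^ 2 ≤ ⟪g, x - y⟫) :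
    ⟪g, x - y⟫ / 2 ≤ f x - f y := by
  have hinner : ⟪g, y - x⟫ = -⟪g, x - y⟫ := by rw [← inner_neg_right, neg_sub]
  rw [hinner, norm_sub_rev] at hsmooth
  linarith

theorem sub_le_inner_of_isMinOn_inner {s : Set E} {f : E → ℝ} {g x v xstar : E}
    (hconv : ⟪g, xstar - x⟫ ≤ f xstar - f x) (hmin : IsMinOn (fun z => ⟪g, z⟫) s v)
    (hxstar : xstar ∈ s) :
    f x - f xstar ≤ ⟪g, x - v⟫ := by
  have hv : ⟪g, v⟫ ≤ ⟪g, xstar⟫ := hmin hxstar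
  rw [inner_sub_right] at hconv ⊢
  linarith

end

theorem fw_truncated_short_step_general {n : ℕ} (P : Set (EuclideanSpace ℝ (Fin n)))
    (L : ℝ)
    (f : EuclideanSpace ℝ (Fin n) → ℝ) (g : EuclideanSpace ℝ (Fin n) → EuclideanSpace ℝ (Fin n))
    (hconv : ∀ x ∈ P, ∀ y ∈ P, f y - f x ≥ ⟪g x, y - x⟫)
    (hsmooth : ∀ x ∈ P, ∀ y ∈ P, f y - f x ≤ ⟪g x, y - x⟫ + L / 2 * ‖y - x‖ ^ 2)
    (xt vt : EuclideanSpace ℝ (Fin n)) (hxt : xt ∈ P) (hvt : vt ∈ P)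
    (hbig : ⟪g xt, xt - vt⟫ ≥ L * ‖xt - vt‖ ^ 2) :
    f xt - f vt ≥ ⟪g xt, xt - vt⟫ / 2 ∧
      (IsMinOn (fun z => ⟪g xt, z⟫) P vt →
        ∀ xstar ∈ P, IsMinOn f P xstar → f xt - f vt ≥ (f xt - f xstar) / 2) := by
  have hdecrease := half_inner_le_sub_of_smooth_bound (hsmooth xt hxt vt hvt) hbig
  refine ⟨hdecrease, fun hmin xstar hxstar _ => ?_⟩
  have hgap := sub_le_inner_of_isMinOn_inner (hconv xt hxt xstar hxstar) hmin hxstar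
  linarith

/-- **Truncated short step (γ = 1) regime.** If `f` is `L`-smooth and convex on a compact convex
`P`, `x_t, v_t ∈ P` with `⟪∇f x_t, x_t - v_t⟫ ≥ L ‖x_t - v_t‖²`, and `x_{t+1} = v_t`, then
`f x_t - f x_{t+1} ≥ ⟪∇f x_t, x_t - v_t⟫ / 2`; if moreover `v_t` minimizes `⟪∇f x_t, ·⟫` over
`P` and `x*` minimizes `f` over `P`, then `f x_t - f x_{t+1} ≥ (f x_t - f x*) / 2`. -/
theorem fw_truncated_short_step {n : ℕ} (P : Set (EuclideanSpace ℝ (Fin n)))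
    (hPne : P.Nonempty) (hPc : IsCompact P) (hPconv : Convex ℝ P) (L : ℝ)
    (f : EuclideanSpace ℝ (Fin n) → ℝ) (g : EuclideanSpace ℝ (Fin n) → EuclideanSpace ℝ (Fin n))
    (hdiff : ∀ x ∈ P, HasGradientAt f (g x) x)
    (hconv : ∀ x ∈ P, ∀ y ∈ P, f y - f x ≥ ⟪g x, y - x⟫)
    (hsmooth : ∀ x ∈ P, ∀ y ∈ P, f y - f x ≤ ⟪g x, y - x⟫ + L / 2 * ‖y - x‖ ^ 2)
    (xt vt : EuclideanSpace ℝ (Fin n)) (hxt : xt ∈ P) (hvt : vt ∈ P)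
    (hbig : ⟪g xt, xt - vt⟫ ≥ L * ‖xt - vt‖ ^ 2) :
    f xt - f vt ≥ ⟪g xt, xt - vt⟫ / 2 ∧
      (IsMinOn (fun z => ⟪g xt, z⟫) P vt →
        ∀ xstar ∈ P, IsMinOn f P xstar → f xt - f vt ≥ (f xt - f xstar) / 2) :=
  fw_truncated_short_step_general P L f g hconv hsmooth xt vt hxt hvt hbig
end

section
/- Let f be differentiable and L-smooth with short step γ_t = min{⟪∇f(x_t), x_t - v_t⟫/(L‖x_t - v_t‖²), 1} ∈ [0,1] (where ⟪∇f(x_t), x_t - v_t⟫ ≥ 0), and x_{t+1} = (1-γ_t)x_t + γ_t v_t. Then f(x_t) - f(x_{t+1}) ≥ ⟪∇f(x_t), x_t - v_t⟫²/(2L‖x_t - v_t‖²) when γ_t < 1. -/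
open scoped RealInnerProductSpace BigOperators

theorem inner_add_half_mul_norm_sq_convexCombo {E : Type*} [NormedAddCommGroup E]
    [InnerProductSpace ℝ E] (g x v : E) (L γ : ℝ) :
    ⟪g, (1 - γ) • x + γ • v - x⟫ + L / 2 * ‖(1 - γ) • x + γ • v - x‖ ^ 2 =
      -(γ * ⟪g, x - v⟫) + L / 2 * (γ ^ 2 * ‖x - v‖ ^ 2) := by
  have hstep : (1 - γ) • x + γ • v - x = -(γ • (x - v)) := by module
  rw [hstep, inner_neg_right, real_inner_smul_right, norm_neg, norm_smul, mul_pow,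
    Real.norm_eq_abs, sq_abs]

/-- The short step `γ = d / (L D)` maximizes `γ d - (L / 2) γ² D`, with maximum `d² / (2 L D)`.
Junk division makes both sides vanish when `L D = 0`. -/
theorem shortStep_mul_sub_half_mul_sq (d D L : ℝ) :
    d / (L * D) * d - L / 2 * ((d / (L * D)) ^ 2 * D) = d ^ 2 / (2 * L * D) := by
  rcases eq_or_ne L 0 with rfl | hL
  · simp
  rcases eq_or_ne D 0 with rfl | hD
  · simp
  field_simp
  ring

theorem fw_short_step_progress_general {n : ℕ} (S : Set (EuclideanSpace ℝ (Fin n)))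
    (hSconv : Convex ℝ S) (L : ℝ) (hL : 0 < L)
    (f : EuclideanSpace ℝ (Fin n) → ℝ) (g : EuclideanSpace ℝ (Fin n) → EuclideanSpace ℝ (Fin n))
    (hsmooth : ∀ x ∈ S, ∀ y ∈ S, f y - f x ≤ ⟪g x, y - x⟫ + L / 2 * ‖y - x‖ ^ 2)
    (xt vt : EuclideanSpace ℝ (Fin n)) (hxt : xt ∈ S) (hvt : vt ∈ S)
    (hpos : 0 ≤ ⟪g xt, xt - vt⟫)
    (γ : ℝ) (hγdef : γ = ⟪g xt, xt - vt⟫ / (L * ‖xt - vt‖ ^ 2)) (hγlt : γ < 1)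
    (xt1 : EuclideanSpace ℝ (Fin n)) (hstep : xt1 = (1 - γ) • xt + γ • vt) :
    f xt - f xt1 ≥ ⟪g xt, xt - vt⟫ ^ 2 / (2 * L * ‖xt - vt‖ ^ 2) := by
  subst hstep
  have hγ_nonneg : 0 ≤ γ := hγdef ▸ div_nonneg hpos (by positivity)
  have hxt1 : (1 - γ) • xt + γ • vt ∈ S :=
    hSconv hxt hvt (sub_nonneg.2 hγlt.le) hγ_nonneg (sub_add_cancel 1 γ)
  have hdescent := hsmooth xt hxt _ hxt1
  rw [inner_add_half_mul_norm_sq_convexCombo] at hdescent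
  have hvalue := shortStep_mul_sub_half_mul_sq ⟪g xt, xt - vt⟫ (‖xt - vt‖ ^ 2) L
  rw [← hγdef] at hvalue
  linarith

/-- **Primal progress of the short step.** With `γ_t = ⟪∇f x_t, x_t - v_t⟫/(L ‖x_t - v_t‖²) < 1`
(the untruncated short step) and `x_{t+1} = (1-γ_t) x_t + γ_t v_t`, `L`-smoothness gives
`f x_t - f x_{t+1} ≥ ⟪∇f x_t, x_t - v_t⟫² / (2 L ‖x_t - v_t‖²)`. -/
theorem fw_short_step_progress {n : ℕ} (S : Set (EuclideanSpace ℝ (Fin n)))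
    (hSconv : Convex ℝ S) (L : ℝ) (hL : 0 < L)
    (f : EuclideanSpace ℝ (Fin n) → ℝ) (g : EuclideanSpace ℝ (Fin n) → EuclideanSpace ℝ (Fin n))
    (hdiff : ∀ x ∈ S, HasGradientAt f (g x) x)
    (hsmooth : ∀ x ∈ S, ∀ y ∈ S, f y - f x ≤ ⟪g x, y - x⟫ + L / 2 * ‖y - x‖ ^ 2)
    (xt vt : EuclideanSpace ℝ (Fin n)) (hxt : xt ∈ S) (hvt : vt ∈ S) (hne : xt ≠ vt)
    (hpos : 0 ≤ ⟪g xt, xt - vt⟫)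
    (γ : ℝ) (hγdef : γ = ⟪g xt, xt - vt⟫ / (L * ‖xt - vt‖ ^ 2)) (hγlt : γ < 1)
    (xt1 : EuclideanSpace ℝ (Fin n)) (hstep : xt1 = (1 - γ) • xt + γ • vt) :
    f xt - f xt1 ≥ ⟪g xt, xt - vt⟫ ^ 2 / (2 * L * ‖xt - vt‖ ^ 2) :=
  fw_short_step_progress_general S hSconv L hL f g hsmooth xt vt hxt hvt hpos γ hγdef hγlt xt1 hstep
end

section
/- Let f be differentiable and L-smooth in the gradient sense: ⟪∇f(y) - ∇f(x), y-x⟫ ≤ L‖y-x‖² for all x, y. Let x_{t+1} = (1-γ_t)x_t + γ_t v_t with γ_t = min{⟪∇f(x_t), x_t - v_t⟫/(L‖x_t - v_t‖²), 1}, where ⟪∇f(x_t), x_t - v_t⟫ ≥ 0. Then ⟪∇f(x_{t+1}), x_t - v_t⟫ ≥ 0. -/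
open scoped RealInnerProductSpace

/-!
Write `d = x_t - v_t`, so that `x_{t+1} = x_t - γ d`. Smoothness between `x_t` and `x_{t+1}` gives
`γ (⟪∇f x_t, d⟫ - ⟪∇f x_{t+1}, d⟫) ≤ L γ² ‖d‖²`, and the short step is chosen precisely so that
`γ L ‖d‖² ≤ ⟪∇f x_t, d⟫`; for `γ > 0` the two combine to `⟪∇f x_{t+1}, d⟫ ≥ 0`.
-/

lemma min_div_one_nonneg {a c : ℝ} (ha : 0 ≤ a) (hc : 0 ≤ c) : 0 ≤ min (a / c) 1 :=
  le_min (div_nonneg ha hc) zero_le_one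

lemma min_div_one_mul_le {a c : ℝ} (ha : 0 ≤ a) (hc : 0 ≤ c) : min (a / c) 1 * c ≤ a :=
  mul_le_of_le_div₀ ha hc (min_le_left _ _)

lemma inner_apply_sub_smul_nonneg {E : Type*} [NormedAddCommGroup E] [InnerProductSpace ℝ E]
    {g : E → E} {L : ℝ} (hsmooth : ∀ x y, ⟪g y - g x, y - x⟫ ≤ L * ‖y - x‖ ^ 2)
    {x d : E} {γ : ℝ} (hγ : 0 ≤ γ) (hstep : γ * (L * ‖d‖ ^ 2) ≤ ⟪g x, d⟫) :
    0 ≤ ⟪g (x - γ • d), d⟫ := by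
  rcases hγ.eq_or_lt with rfl | hγ
  · simpa using hstep
  have hsegment := hsmooth x (x - γ • d)
  have hinner : ⟪g (x - γ • d) - g x, x - γ • d - x⟫ = γ * (⟪g x, d⟫ - ⟪g (x - γ • d), d⟫) := by
    rw [sub_sub_cancel_left, inner_neg_right, real_inner_smul_right, inner_sub_left]
    ring
  have hnorm : ‖x - γ • d - x‖ ^ 2 = γ ^ 2 * ‖d‖ ^ 2 := by
    rw [sub_sub_cancel_left, norm_neg, norm_smul, mul_pow, Real.norm_eq_abs, sq_abs]
  rw [hinner, hnorm] at hsegment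
  exact nonneg_of_mul_nonneg_right (by nlinarith) hγ

theorem fw_smoothness_implies_altAdaptive_general {n : ℕ} (L : ℝ) (hL : 0 < L)
    (g : EuclideanSpace ℝ (Fin n) → EuclideanSpace ℝ (Fin n))
    (hsmooth : ∀ x y, ⟪g y - g x, y - x⟫ ≤ L * ‖y - x‖ ^ 2)
    (xt vt : EuclideanSpace ℝ (Fin n))
    (hpos : 0 ≤ ⟪g xt, xt - vt⟫)
    (γ : ℝ) (hγdef : γ = min (⟪g xt, xt - vt⟫ / (L * ‖xt - vt‖ ^ 2)) 1)
    (xt1 : EuclideanSpace ℝ (Fin n)) (hstep : xt1 = (1 - γ) • xt + γ • vt) :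
    0 ≤ ⟪g xt1, xt - vt⟫ := by
  have hcurv : 0 ≤ L * ‖xt - vt‖ ^ 2 := by positivity
  have hxt1 : xt1 = xt - γ • (xt - vt) := by rw [hstep]; module
  rw [hxt1]
  refine inner_apply_sub_smul_nonneg hsmooth ?_ ?_
  · exact hγdef ▸ min_div_one_nonneg hpos hcurv
  · exact hγdef ▸ min_div_one_mul_le hpos hcurv

/-- **Smoothness implies (altAdaptive).** If `⟪∇f y - ∇f x, y - x⟫ ≤ L ‖y - x‖²` for all `x, y`,
and `x_{t+1} = (1-γ_t) x_t + γ_t v_t` with the truncated short step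
`γ_t = min {⟪∇f x_t, x_t - v_t⟫/(L ‖x_t - v_t‖²), 1}`, then `⟪∇f x_{t+1}, x_t - v_t⟫ ≥ 0`. -/
theorem fw_smoothness_implies_altAdaptive {n : ℕ} (L : ℝ) (hL : 0 < L)
    (f : EuclideanSpace ℝ (Fin n) → ℝ) (g : EuclideanSpace ℝ (Fin n) → EuclideanSpace ℝ (Fin n))
    (hdiff : ∀ x, HasGradientAt f (g x) x)
    (hsmooth : ∀ x y, ⟪g y - g x, y - x⟫ ≤ L * ‖y - x‖ ^ 2)
    (xt vt : EuclideanSpace ℝ (Fin n)) (hne : xt ≠ vt)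
    (hpos : 0 ≤ ⟪g xt, xt - vt⟫)
    (γ : ℝ) (hγdef : γ = min (⟪g xt, xt - vt⟫ / (L * ‖xt - vt‖ ^ 2)) 1)
    (xt1 : EuclideanSpace ℝ (Fin n)) (hstep : xt1 = (1 - γ) • xt + γ • vt) :
    0 ≤ ⟪g xt1, xt - vt⟫ :=
  fw_smoothness_implies_altAdaptive_general L hL g hsmooth xt vt hpos γ hγdef xt1 hstep
end

section
/- Let f be L-smooth in the gradient sense and convex, let M = 2L, γ_t = min{⟪∇f(x_t), x_t - v_t⟫/(M‖x_t - v_t‖²), 1}, x_{t+1} = (1-γ_t)x_t + γ_t v_t. Then ⟪∇f(x_{t+1}), x_t - v_t⟫ ≥ (1/2)⟪∇f(x_t), x_t - v_t⟫. -/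
/-!
Along the segment `x - t • d`, gradient smoothness bounds how fast the directional derivative
`⟪g (x - t • d), d⟫` can decrease: by at most `L t ‖d‖²`. The step `γ` is chosen so that
`L γ ‖d‖² ≤ ⟪g x, d⟫ / 2`, hence at most half of the initial slope is lost.
-/

open scoped RealInnerProductSpace

variable {E : Type*} [NormedAddCommGroup E] [InnerProductSpace ℝ E]

theorem mul_inner_sub_inner_smul_le {g : E → E} {L : ℝ}
    (hsmooth : ∀ x y, ⟪g y - g x, y - x⟫ ≤ L * ‖y - x‖ ^ 2) (x d : E) (t : ℝ) :
    t * (⟪g x, d⟫ - ⟪g (x - t • d), d⟫) ≤ L * t ^ 2 * ‖d‖ ^ 2 := by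
  have h := hsmooth x (x - t • d)
  rw [sub_sub_cancel_left, inner_neg_right, norm_neg, norm_smul, real_inner_smul_right,
    inner_sub_left, Real.norm_eq_abs, mul_pow, sq_abs] at h
  linarith

theorem half_inner_le_inner_smul_of_step_le {g : E → E} {L : ℝ}
    (hsmooth : ∀ x y, ⟪g y - g x, y - x⟫ ≤ L * ‖y - x‖ ^ 2) {x d : E} {γ : ℝ}
    (hslope : 0 ≤ ⟪g x, d⟫) (hγ : 0 ≤ γ) (hstep : 2 * L * γ * ‖d‖ ^ 2 ≤ ⟪g x, d⟫) :
    (1 / 2) * ⟪g x, d⟫ ≤ ⟪g (x - γ • d), d⟫ := by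
  rcases hγ.eq_or_lt with rfl | hγpos
  · rw [zero_smul, sub_zero]
    linarith
  · have hdecay := mul_inner_sub_inner_smul_le hsmooth x d γ
    have hloss : γ * (⟪g x, d⟫ - ⟪g (x - γ • d), d⟫) ≤ γ * ((1 / 2) * ⟪g x, d⟫) :=
      calc γ * (⟪g x, d⟫ - ⟪g (x - γ • d), d⟫) ≤ L * γ ^ 2 * ‖d‖ ^ 2 := hdecay
        _ = γ / 2 * (2 * L * γ * ‖d‖ ^ 2) := by ring
        _ ≤ γ / 2 * ⟪g x, d⟫ := by gcongr
        _ = γ * ((1 / 2) * ⟪g x, d⟫) := by ring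
    linarith [le_of_mul_le_mul_left hloss hγpos]

theorem fw_smoothness_implies_altAdaptive_simple_general {n : ℕ} (L : ℝ) (hL : 0 < L)
    (g : EuclideanSpace ℝ (Fin n) → EuclideanSpace ℝ (Fin n))
    (hsmooth : ∀ x y, ⟪g y - g x, y - x⟫ ≤ L * ‖y - x‖ ^ 2)
    (xt vt : EuclideanSpace ℝ (Fin n))
    (hpos : 0 ≤ ⟪g xt, xt - vt⟫)
    (M : ℝ) (hM : M = 2 * L)
    (γ : ℝ) (hγdef : γ = min (⟪g xt, xt - vt⟫ / (M * ‖xt - vt‖ ^ 2)) 1)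
    (xt1 : EuclideanSpace ℝ (Fin n)) (hstep : xt1 = (1 - γ) • xt + γ • vt) :
    (1 / 2) * ⟪g xt, xt - vt⟫ ≤ ⟪g xt1, xt - vt⟫ := by
  have hden : 0 ≤ M * ‖xt - vt‖ ^ 2 := by rw [hM]; positivity
  have hγ : 0 ≤ γ := hγdef ▸ le_min (div_nonneg hpos hden) zero_le_one
  have hγle : γ * (M * ‖xt - vt‖ ^ 2) ≤ ⟪g xt, xt - vt⟫ :=
    mul_le_of_le_div₀ hpos hden (hγdef ▸ min_le_left _ _)
  have hxt1 : xt1 = xt - γ • (xt - vt) := by rw [hstep]; module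
  rw [hxt1]
  refine half_inner_le_inner_smul_of_step_le hsmooth hpos hγ ?_
  rw [hM] at hγle
  linarith

/-- **Smoothness implies (altAdaptive-simple).** If `f` is `L`-smooth in the gradient sense and
convex, `M = 2L`, `γ_t = min {⟪∇f x_t, x_t - v_t⟫/(M ‖x_t - v_t‖²), 1}`, and
`x_{t+1} = (1-γ_t) x_t + γ_t v_t`, then `⟪∇f x_{t+1}, x_t - v_t⟫ ≥ (1/2) ⟪∇f x_t, x_t - v_t⟫`. -/
theorem fw_smoothness_implies_altAdaptive_simple {n : ℕ} (L : ℝ) (hL : 0 < L)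
    (f : EuclideanSpace ℝ (Fin n) → ℝ) (g : EuclideanSpace ℝ (Fin n) → EuclideanSpace ℝ (Fin n))
    (hdiff : ∀ x, HasGradientAt f (g x) x)
    (hsmooth : ∀ x y, ⟪g y - g x, y - x⟫ ≤ L * ‖y - x‖ ^ 2)
    (hconv : ∀ x y, f y - f x ≥ ⟪g x, y - x⟫)
    (xt vt : EuclideanSpace ℝ (Fin n)) (hne : xt ≠ vt)
    (hpos : 0 ≤ ⟪g xt, xt - vt⟫)
    (M : ℝ) (hM : M = 2 * L)
    (γ : ℝ) (hγdef : γ = min (⟪g xt, xt - vt⟫ / (M * ‖xt - vt‖ ^ 2)) 1)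
    (xt1 : EuclideanSpace ℝ (Fin n)) (hstep : xt1 = (1 - γ) • xt + γ • vt) :
    (1 / 2) * ⟪g xt, xt - vt⟫ ≤ ⟪g xt1, xt - vt⟫ :=
  fw_smoothness_implies_altAdaptive_simple_general L hL g hsmooth xt vt hpos M hM γ hγdef xt1 hstep
end

section
/- Let f be differentiable and convex, let x_{t+1} = (1-γ_t)x_t + γ_t v_t with γ_t = min{⟪∇f(x_t), x_t - v_t⟫/(M‖x_t - v_t‖²), 1} for some M > 0, and suppose ⟪∇f(x_{t+1}), x_t - v_t⟫ ≥ (1/2)⟪∇f(x_t), x_t - v_t⟫. Then f(x_t) - f(x_{t+1}) ≥ γ_t ⟪∇f(x_t), x_t - v_t⟫/2. -/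
open scoped RealInnerProductSpace BigOperators

/-!
The gradient inequality at the new iterate, `f xₜ - f xₜ₊₁ ≥ ⟪∇f xₜ₊₁, xₜ - xₜ₊₁⟫`, together with
`xₜ - xₜ₊₁ = γₜ (xₜ - vₜ)`, bounds the progress below by `γₜ ⟪∇f xₜ₊₁, xₜ - vₜ⟫`; the test condition
and `γₜ ≥ 0` then give half of `γₜ ⟪∇f xₜ, xₜ - vₜ⟫`.
-/

section StepProgress

variable {E : Type*} [NormedAddCommGroup E] [InnerProductSpace ℝ E]

lemma sub_convexStep_eq_smul (x v : E) (γ : ℝ) : x - ((1 - γ) • x + γ • v) = γ • (x - v) := by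
  module

lemma mul_inner_le_sub_of_convexStep (f : E → ℝ) (g x v : E) (γ : ℝ)
    (hsupp : ⟪g, x - ((1 - γ) • x + γ • v)⟫ ≤ f x - f ((1 - γ) • x + γ • v)) :
    γ * ⟪g, x - v⟫ ≤ f x - f ((1 - γ) • x + γ • v) := by
  rwa [sub_convexStep_eq_smul, real_inner_smul_right] at hsupp

end StepProgress

lemma adaptiveStepSize_nonneg {a M d : ℝ} (ha : 0 ≤ a) (hM : 0 ≤ M) :
    0 ≤ min (a / (M * d ^ 2)) 1 :=
  le_min (div_nonneg ha (by positivity)) zero_le_one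

theorem fw_progress_from_altAdaptive_simple_general {n : ℕ}
    (f : EuclideanSpace ℝ (Fin n) → ℝ) (g : EuclideanSpace ℝ (Fin n) → EuclideanSpace ℝ (Fin n))
    (hconv : ∀ x y, f y - f x ≥ ⟪g x, y - x⟫)
    (xt vt : EuclideanSpace ℝ (Fin n))
    (hpos : 0 ≤ ⟪g xt, xt - vt⟫)
    (M : ℝ) (hM : 0 < M)
    (γ : ℝ) (hγdef : γ = min (⟪g xt, xt - vt⟫ / (M * ‖xt - vt‖ ^ 2)) 1)
    (xt1 : EuclideanSpace ℝ (Fin n)) (hstep : xt1 = (1 - γ) • xt + γ • vt)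
    (htest : (1 / 2) * ⟪g xt, xt - vt⟫ ≤ ⟪g xt1, xt - vt⟫) :
    f xt - f xt1 ≥ γ * ⟪g xt, xt - vt⟫ / 2 := by
  have hγ : 0 ≤ γ := hγdef ▸ adaptiveStepSize_nonneg hpos hM.le
  subst hstep
  have hprogress := mul_inner_le_sub_of_convexStep f _ xt vt γ (hconv _ xt)
  linarith [mul_le_mul_of_nonneg_left htest hγ]

/-- **Primal progress from (altAdaptive-simple).** If `f` is convex with gradient `g`,
`x_{t+1} = (1-γ_t) x_t + γ_t v_t` with `γ_t = min {⟪∇f x_t, x_t - v_t⟫/(M ‖x_t - v_t‖²), 1}`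
for some `M > 0`, and `⟪∇f x_{t+1}, x_t - v_t⟫ ≥ (1/2) ⟪∇f x_t, x_t - v_t⟫`, then
`f x_t - f x_{t+1} ≥ γ_t ⟪∇f x_t, x_t - v_t⟫ / 2`. -/
theorem fw_progress_from_altAdaptive_simple {n : ℕ}
    (f : EuclideanSpace ℝ (Fin n) → ℝ) (g : EuclideanSpace ℝ (Fin n) → EuclideanSpace ℝ (Fin n))
    (hdiff : ∀ x, HasGradientAt f (g x) x)
    (hconv : ∀ x y, f y - f x ≥ ⟪g x, y - x⟫)
    (xt vt : EuclideanSpace ℝ (Fin n)) (hne : xt ≠ vt)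
    (hpos : 0 ≤ ⟪g xt, xt - vt⟫)
    (M : ℝ) (hM : 0 < M)
    (γ : ℝ) (hγdef : γ = min (⟪g xt, xt - vt⟫ / (M * ‖xt - vt‖ ^ 2)) 1)
    (xt1 : EuclideanSpace ℝ (Fin n)) (hstep : xt1 = (1 - γ) • xt + γ • vt)
    (htest : (1 / 2) * ⟪g xt, xt - vt⟫ ≤ ⟪g xt1, xt - vt⟫) :
    f xt - f xt1 ≥ γ * ⟪g xt, xt - vt⟫ / 2 :=
  fw_progress_from_altAdaptive_simple_general f g hconv xt vt hpos M hM γ hγdef xt1 hstep htest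
end

section
/- Let f be L-smooth and convex on the D-neighborhood of a compact convex set P of diameter D. Let x_{t+1} = (1-γ_t)x_t + γ_t v_t with x_t, v_t ∈ P, x_t ≠ v_t, γ_t = min{⟪∇f(x_t), x_t - v_t⟫/(M‖x_t - v_t‖²), 1} ∈ [0,1) for some M > 0, and suppose ⟪∇f(x_{t+1}), x_t - v_t⟫ ≥ 0. Then f(x_t) - f(x_{t+1}) ≥ (⟪∇f(x_t), x_t - v_t⟫² + ⟪∇f(x_{t+1}), x_t - v_t⟫²)/(2·max{L,M}·‖x_t - v_t‖²). -/
/-! Co-coercivity of the gradient on `P`, applied to `x_t` and `x_{t+1} = x_t - γ (x_t - v_t)`,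
gives `f x_t - f x_{t+1} ≥ γ h' + (h - h')² / (2 L ‖x_t - v_t‖²)`, where `h` and `h'` are the
slopes of `f` along `x_t - v_t` at `x_t` and `x_{t+1}`. Since `γ < 1`, `γ = h / (M ‖x_t - v_t‖²)`,
so `γ h' ≥ h h' / (max L M ‖x_t - v_t‖²)`, and `h² + h'² = 2 h h' + (h - h')²` finishes. -/

open scoped RealInnerProductSpace

section ConvexSmooth

variable {E : Type*} [NormedAddCommGroup E] [InnerProductSpace ℝ E]
  {P : Set E} {f : E → ℝ} {g : E → E} {L γ : ℝ} {x y v : E}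

theorem inner_sub_gradient_nonneg (hconv : ∀ x ∈ P, ∀ y ∈ P, f y - f x ≥ ⟪g x, y - x⟫)
    (hx : x ∈ P) (hy : y ∈ P) : 0 ≤ ⟪g y - g x, y - x⟫ := by
  have hxy := hconv x hx y hy
  have hyx := hconv y hy x hx
  rw [← neg_sub y x, inner_neg_right] at hyx
  rw [inner_sub_left]
  linarith

theorem inner_sub_gradient_le
    (hsmooth : ∀ x ∈ P, ∀ y ∈ P, f y - f x ≤ ⟪g x, y - x⟫ + L / 2 * ‖y - x‖ ^ 2)
    (hx : x ∈ P) (hy : y ∈ P) : ⟪g y - g x, y - x⟫ ≤ L * ‖y - x‖ ^ 2 := by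
  have hxy := hsmooth x hx y hy
  have hyx := hsmooth y hy x hx
  rw [← neg_sub y x, inner_neg_right, norm_neg] at hyx
  rw [inner_sub_left]
  linarith

theorem sq_inner_sub_gradient_div_le (hP : Convex ℝ P) (hL : 0 < L)
    (hconv : ∀ x ∈ P, ∀ y ∈ P, f y - f x ≥ ⟪g x, y - x⟫)
    (hsmooth : ∀ x ∈ P, ∀ y ∈ P, f y - f x ≤ ⟪g x, y - x⟫ + L / 2 * ‖y - x‖ ^ 2)
    (hx : x ∈ P) (hy : y ∈ P) :
    ⟪g y - g x, y - x⟫ ^ 2 / (2 * L * ‖y - x‖ ^ 2) ≤ f y - f x - ⟪g x, y - x⟫ := by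
  rcases eq_or_ne y x with rfl | hyx
  · simp
  have hQ : 0 < ‖y - x‖ ^ 2 := pow_pos (norm_pos_iff.2 (sub_ne_zero.2 hyx)) 2
  set s := ⟪g y - g x, y - x⟫ with hs
  set t := s / (L * ‖y - x‖ ^ 2)
  have ht0 : 0 ≤ t := div_nonneg (inner_sub_gradient_nonneg hconv hx hy) (by positivity)
  have ht1 : t ≤ 1 := div_le_one_of_le₀ (inner_sub_gradient_le hsmooth hx hy) (by positivity)
  -- Compare the convexity lower bound from `x` with the smoothness upper bound from `y`
  -- at the point `y - t • (y - x)`, with `t` the minimiser of `t s - L t² ‖y - x‖² / 2`.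
  have hz : y - t • (y - x) ∈ P := by
    convert hP hy hx (sub_nonneg.2 ht1) ht0 (by ring) using 1
    module
  have lower := hconv x hx _ hz
  have upper := hsmooth y hy _ hz
  rw [show y - t • (y - x) - x = (1 - t) • (y - x) by module, inner_smul_right] at lower
  rw [show y - t • (y - x) - y = (-t) • (y - x) by module, inner_smul_right, norm_smul,
    mul_pow, Real.norm_eq_abs, sq_abs] at upper
  rw [inner_sub_left] at hs
  have hopt : t * s - L / 2 * (t ^ 2 * ‖y - x‖ ^ 2) = s ^ 2 / (2 * L * ‖y - x‖ ^ 2) := by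
    simp only [t]
    field_simp
    ring
  nlinarith

theorem inner_step_add_sq_div_le_sub (hP : Convex ℝ P) (hL : 0 < L)
    (hconv : ∀ x ∈ P, ∀ y ∈ P, f y - f x ≥ ⟪g x, y - x⟫)
    (hsmooth : ∀ x ∈ P, ∀ y ∈ P, f y - f x ≤ ⟪g x, y - x⟫ + L / 2 * ‖y - x‖ ^ 2)
    (hx : x ∈ P) (hv : v ∈ P) (hγ0 : 0 ≤ γ) (hγ1 : γ ≤ 1) :
    γ * ⟪g ((1 - γ) • x + γ • v), x - v⟫ +
        (⟪g x, x - v⟫ - ⟪g ((1 - γ) • x + γ • v), x - v⟫) ^ 2 / (2 * L * ‖x - v‖ ^ 2) ≤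
      f x - f ((1 - γ) • x + γ • v) := by
  rcases hγ0.eq_or_lt with rfl | hγ
  · simp
  set y := (1 - γ) • x + γ • v
  have hyP : y ∈ P := hP hx hv (sub_nonneg.2 hγ1) hγ0 (by ring)
  have key := sq_inner_sub_gradient_div_le hP hL hconv hsmooth hyP hx
  rw [show x - y = γ • (x - v) by module, inner_smul_right, inner_smul_right, norm_smul,
    Real.norm_eq_abs, abs_of_pos hγ, inner_sub_left] at key
  have hcancel : (γ * (⟪g x, x - v⟫ - ⟪g y, x - v⟫)) ^ 2 / (2 * L * (γ * ‖x - v‖) ^ 2) =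
      (⟪g x, x - v⟫ - ⟪g y, x - v⟫) ^ 2 / (2 * L * ‖x - v‖ ^ 2) := by
    rw [mul_pow, mul_pow, mul_left_comm, mul_div_mul_left _ _ (pow_ne_zero 2 hγ.ne')]
  linarith

end ConvexSmooth

theorem add_sq_div_max_le {a b γ L M Q : ℝ} (hL : 0 < L) (hQ : 0 < Q)
    (hγ0 : 0 ≤ γ) (hb : 0 ≤ b) (ha : γ * (M * Q) = a) :
    (a ^ 2 + b ^ 2) / (2 * max L M * Q) ≤ γ * b + (a - b) ^ 2 / (2 * L * Q) := by
  have hC : 0 < max L M := lt_max_of_lt_left hL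
  have hfirst : a * b / (max L M * Q) ≤ γ * b := by
    rw [div_le_iff₀ (by positivity), ← ha]
    have := mul_nonneg (mul_nonneg hγ0 hb) (mul_nonneg hQ.le (sub_nonneg.2 (le_max_right L M)))
    nlinarith
  have hsecond : (a - b) ^ 2 / (2 * max L M * Q) ≤ (a - b) ^ 2 / (2 * L * Q) := by
    gcongr
    exact le_max_left L M
  calc (a ^ 2 + b ^ 2) / (2 * max L M * Q)
      = a * b / (max L M * Q) + (a - b) ^ 2 / (2 * max L M * Q) := by
        field_simp
        ring
    _ ≤ γ * b + (a - b) ^ 2 / (2 * L * Q) := add_le_add hfirst hsecond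

theorem fw_progress_from_altAdaptive_general {n : ℕ} (P : Set (EuclideanSpace ℝ (Fin n)))
    (hPconv : Convex ℝ P)
    (L D : ℝ) (hL : 0 < L)
    (hD : ∀ a ∈ P, ∀ b ∈ P, ‖a - b‖ ≤ D)
    (N : Set (EuclideanSpace ℝ (Fin n)))
    (hN : N = {z | Metric.infDist z P ≤ D})
    (f : EuclideanSpace ℝ (Fin n) → ℝ) (g : EuclideanSpace ℝ (Fin n) → EuclideanSpace ℝ (Fin n))
    (hconv : ∀ x ∈ N, ∀ y ∈ N, f y - f x ≥ ⟪g x, y - x⟫)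
    (hsmooth : ∀ x ∈ N, ∀ y ∈ N, f y - f x ≤ ⟪g x, y - x⟫ + L / 2 * ‖y - x‖ ^ 2)
    (xt vt : EuclideanSpace ℝ (Fin n)) (hxt : xt ∈ P) (hvt : vt ∈ P) (hne : xt ≠ vt)
    (M : ℝ) (hM : 0 < M)
    (γ : ℝ) (hγdef : γ = min (⟪g xt, xt - vt⟫ / (M * ‖xt - vt‖ ^ 2)) 1) (hγlt : γ < 1)
    (hγ0 : 0 ≤ γ)
    (xt1 : EuclideanSpace ℝ (Fin n)) (hstep : xt1 = (1 - γ) • xt + γ • vt)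
    (htest : 0 ≤ ⟪g xt1, xt - vt⟫) :
    f xt - f xt1 ≥ (⟪g xt, xt - vt⟫ ^ 2 + ⟪g xt1, xt - vt⟫ ^ 2) /
      (2 * max L M * ‖xt - vt‖ ^ 2) := by
  have hPN : P ⊆ N := fun z hz => by
    rw [hN]
    exact (Metric.infDist_zero_of_mem hz).trans_le ((norm_nonneg _).trans (hD xt hxt xt hxt))
  have hQ : 0 < ‖xt - vt‖ ^ 2 := pow_pos (norm_pos_iff.2 (sub_ne_zero.2 hne)) 2
  have hγ : γ * (M * ‖xt - vt‖ ^ 2) = ⟪g xt, xt - vt⟫ := by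
    rw [hγdef] at hγlt ⊢
    rw [min_eq_left ((min_lt_iff.1 hγlt).resolve_right (lt_irrefl 1)).le]
    exact div_mul_cancel₀ _ (by positivity)
  subst hstep
  exact (add_sq_div_max_le hL hQ hγ0 htest hγ).trans <|
    inner_step_add_sq_div_le_sub hPconv hL (fun x hx y hy => hconv x (hPN hx) y (hPN hy))
      (fun x hx y hy => hsmooth x (hPN hx) y (hPN hy)) hxt hvt hγ0 hγlt.le

/-- **Primal progress from (altAdaptive), interior step case.** If `f` is `L`-smooth and convex
on the `D`-neighborhood of a compact convex set `P` of diameter `D`,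
`x_{t+1} = (1-γ_t) x_t + γ_t v_t` with `γ_t = min {⟪∇f x_t, x_t - v_t⟫/(M ‖x_t - v_t‖²), 1} < 1`
for some `M > 0`, and `⟪∇f x_{t+1}, x_t - v_t⟫ ≥ 0`, then
`f x_t - f x_{t+1} ≥ (⟪∇f x_t, x_t - v_t⟫² + ⟪∇f x_{t+1}, x_t - v_t⟫²) / (2 max{L,M} ‖x_t - v_t‖²)`. -/
theorem fw_progress_from_altAdaptive {n : ℕ} (P : Set (EuclideanSpace ℝ (Fin n)))
    (hPne : P.Nonempty) (hPc : IsCompact P) (hPconv : Convex ℝ P)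
    (L D : ℝ) (hL : 0 < L)
    (hD : ∀ a ∈ P, ∀ b ∈ P, ‖a - b‖ ≤ D)
    (N : Set (EuclideanSpace ℝ (Fin n)))
    (hN : N = {z | Metric.infDist z P ≤ D})
    (f : EuclideanSpace ℝ (Fin n) → ℝ) (g : EuclideanSpace ℝ (Fin n) → EuclideanSpace ℝ (Fin n))
    (hdiff : ∀ x ∈ N, HasGradientAt f (g x) x)
    (hconv : ∀ x ∈ N, ∀ y ∈ N, f y - f x ≥ ⟪g x, y - x⟫)
    (hsmooth : ∀ x ∈ N, ∀ y ∈ N, f y - f x ≤ ⟪g x, y - x⟫ + L / 2 * ‖y - x‖ ^ 2)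
    (xt vt : EuclideanSpace ℝ (Fin n)) (hxt : xt ∈ P) (hvt : vt ∈ P) (hne : xt ≠ vt)
    (M : ℝ) (hM : 0 < M)
    (γ : ℝ) (hγdef : γ = min (⟪g xt, xt - vt⟫ / (M * ‖xt - vt‖ ^ 2)) 1) (hγlt : γ < 1)
    (hγ0 : 0 ≤ γ)
    (xt1 : EuclideanSpace ℝ (Fin n)) (hstep : xt1 = (1 - γ) • xt + γ • vt)
    (htest : 0 ≤ ⟪g xt1, xt - vt⟫) :
    f xt - f xt1 ≥ (⟪g xt, xt - vt⟫ ^ 2 + ⟪g xt1, xt - vt⟫ ^ 2) /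
      (2 * max L M * ‖xt - vt‖ ^ 2) :=
  fw_progress_from_altAdaptive_general P hPconv L D hL hD N hN f g hconv hsmooth xt vt hxt hvt hne M
    hM γ hγdef hγlt hγ0 xt1 hstep htest
end

section
/- Let f be convex and differentiable on a compact convex set P, and let the Frank-Wolfe iterates satisfy x_{t+1} = (1-γ_t)x_t + γ_t v_t with v_t ∈ P and γ_t ∈ [0,1]. Then f(x_t) - f(x*) ≥ (∏_{τ=1}^{t-1}(1-γ_τ))·⟪∇f(x*), x_1 - x*⟫ for t ≥ 1, where x* is a minimizer of f over P. In particular, for γ_τ = 2/(τ+2), f(x_t) - f(x*) ≥ (2/(t(t+1)))·⟪∇f(x*), x_1 - x*⟫. -/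
/-!
Convexity at the minimiser gives `f (x t) - f x* ≥ ⟪∇f x*, x t - x*⟫`, so it suffices to bound the
linear gap `a t := ⟪∇f x*, x t - x*⟫` from below. Along a Frank-Wolfe step,
`a (t+1) = (1 - γ t) a t + γ t ⟪∇f x*, v t - x*⟫`, and the last inner product is nonnegative by
first-order optimality of `x*` over `P`; hence `a (t+1) ≥ (1 - γ t) a t`, which telescopes. For
`γ τ = 2/(τ+2)` the factors are `τ/(τ+2)`, whose product over `τ = 1, …, k` is `2/((k+1)(k+2))`.
-/

open scoped RealInnerProductSpace

open Finset

theorem Convex.iterate_mem {E : Type*} [AddCommGroup E] [Module ℝ E] {s : Set E}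
    (hs : Convex ℝ s) {x v : ℕ → E} {γ : ℕ → ℝ} (hx0 : x 0 ∈ s) (hv : ∀ t, v t ∈ s)
    (hγ0 : ∀ t, 0 ≤ γ t) (hγ1 : ∀ t, γ t ≤ 1)
    (hstep : ∀ t, x (t + 1) = (1 - γ t) • x t + γ t • v t) (t : ℕ) : x t ∈ s := by
  induction t with
  | zero => exact hx0
  | succ k ih =>
    rw [hstep k]
    exact hs ih (hv k) (sub_nonneg.2 (hγ1 k)) (hγ0 k) (sub_add_cancel 1 (γ k))

theorem IsMinOn.inner_gradient_sub_nonneg {E : Type*} [NormedAddCommGroup E]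
    [InnerProductSpace ℝ E] [CompleteSpace E] {f : E → ℝ} {s : Set E} {a y g : E} (hs : Convex ℝ s)
    (hmin : IsMinOn f s a) (ha : a ∈ s) (hf : HasGradientAt f g a) (hy : y ∈ s) :
    0 ≤ ⟪g, y - a⟫ := by
  have hcone : y - a ∈ posTangentConeAt s a :=
    sub_mem_posTangentConeAt_of_segment_subset (hs.segment_subset ha hy)
  simpa using hmin.localize.hasFDerivWithinAt_nonneg hf.hasFDerivAt.hasFDerivWithinAt hcone

theorem mul_inner_sub_le_inner_convexCombination_sub {E : Type*} [NormedAddCommGroup E]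
    [InnerProductSpace ℝ E] {u z x v : E} {γ : ℝ} (hγ : 0 ≤ γ) (hv : 0 ≤ ⟪u, v - z⟫) :
    (1 - γ) * ⟪u, x - z⟫ ≤ ⟪u, ((1 - γ) • x + γ • v) - z⟫ := by
  have hsplit : ((1 - γ) • x + γ • v) - z = (1 - γ) • (x - z) + γ • (v - z) := by module
  rw [hsplit, inner_add_right, real_inner_smul_right, real_inner_smul_right]
  exact le_add_of_nonneg_right (mul_nonneg hγ hv)

theorem prod_Ico_mul_le_of_mul_le_succ {a c : ℕ → ℝ} (hc : ∀ t, 0 ≤ c t)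
    (hac : ∀ t, c t * a t ≤ a (t + 1)) {m k : ℕ} (hmk : m ≤ k) :
    (∏ τ ∈ Ico m k, c τ) * a m ≤ a k := by
  induction k, hmk using Nat.le_induction with
  | base => simp
  | succ k hmk ih =>
    rw [prod_Ico_succ_top hmk, mul_comm _ (c k), mul_assoc]
    exact (mul_le_mul_of_nonneg_left ih (hc k)).trans (hac k)

theorem prod_Icc_one_sub_two_div_add_two (k : ℕ) :
    ∏ τ ∈ Icc 1 k, (1 - 2 / ((τ : ℝ) + 2)) = 2 / (((k : ℝ) + 1) * ((k : ℝ) + 2)) := by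
  induction k with
  | zero => norm_num
  | succ k ih =>
    rw [prod_Icc_succ_top (by omega), ih]
    push_cast
    field_simp
    ring

theorem fw_universal_lower_bound_general {n : ℕ} (P : Set (EuclideanSpace ℝ (Fin n)))
    (hPconv : Convex ℝ P)
    (f : EuclideanSpace ℝ (Fin n) → ℝ) (g : EuclideanSpace ℝ (Fin n) → EuclideanSpace ℝ (Fin n))
    (hdiff : ∀ x ∈ P, HasGradientAt f (g x) x)
    (hconv : ∀ x ∈ P, ∀ y ∈ P, f y - f x ≥ ⟪g x, y - x⟫)
    (x v : ℕ → EuclideanSpace ℝ (Fin n)) (hx0 : x 0 ∈ P) (hvP : ∀ t, v t ∈ P)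
    (γ : ℕ → ℝ) (hγ0 : ∀ t, 0 ≤ γ t) (hγ1 : ∀ t, γ t ≤ 1)
    (hstep : ∀ t : ℕ, x (t + 1) = (1 - γ t) • x t + γ t • v t)
    (xstar : EuclideanSpace ℝ (Fin n)) (hxstar : xstar ∈ P) (hmin : IsMinOn f P xstar) :
    ∀ t : ℕ, 1 ≤ t →
      (f (x t) - f xstar ≥ (∏ τ ∈ Finset.Icc 1 (t - 1), (1 - γ τ)) * ⟪g xstar, x 1 - xstar⟫) ∧
      ((∀ τ : ℕ, γ τ = 2 / ((τ : ℝ) + 2)) →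
        f (x t) - f xstar ≥ (2 / ((t : ℝ) * ((t : ℝ) + 1))) * ⟪g xstar, x 1 - xstar⟫) := by
  intro t ht
  obtain ⟨k, rfl⟩ : ∃ k, t = k + 1 := ⟨t - 1, by omega⟩
  have hgap : ⟪g xstar, x (k + 1) - xstar⟫ ≤ f (x (k + 1)) - f xstar :=
    hconv xstar hxstar _ (hPconv.iterate_mem hx0 hvP hγ0 hγ1 hstep _)
  have hstep_gap (τ : ℕ) : (1 - γ τ) * ⟪g xstar, x τ - xstar⟫ ≤ ⟪g xstar, x (τ + 1) - xstar⟫ :=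
    hstep τ ▸ mul_inner_sub_le_inner_convexCombination_sub (hγ0 τ)
      (hmin.inner_gradient_sub_nonneg hPconv hxstar (hdiff xstar hxstar) (hvP τ))
  have hlower : (∏ τ ∈ Icc 1 k, (1 - γ τ)) * ⟪g xstar, x 1 - xstar⟫ ≤ f (x (k + 1)) - f xstar := by
    rw [← Ico_add_one_right_eq_Icc]
    exact (prod_Ico_mul_le_of_mul_le_succ (fun τ ↦ sub_nonneg.2 (hγ1 τ)) hstep_gap
      (by omega)).trans hgap
  refine ⟨by simpa using hlower, fun hγ ↦ ?_⟩
  simp only [hγ, prod_Icc_one_sub_two_div_add_two] at hlower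
  convert hlower using 3
  push_cast
  ring

/-- **Universal lower bound for Frank-Wolfe with fixed step-sizes.** For convex `f` on compact
convex `P` and iterates `x_{t+1} = (1-γ_t) x_t + γ_t v_t` with `v_t ∈ P`, `γ_t ∈ [0,1]`:
`f (x t) - f x* ≥ (∏_{τ=1}^{t-1} (1-γ_τ)) ⟪∇f x*, x₁ - x*⟫` for `t ≥ 1`; in particular for
`γ_τ = 2/(τ+2)` we get `f (x t) - f x* ≥ (2/(t(t+1))) ⟪∇f x*, x₁ - x*⟫`. -/
theorem fw_universal_lower_bound {n : ℕ} (P : Set (EuclideanSpace ℝ (Fin n)))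
    (hPne : P.Nonempty) (hPc : IsCompact P) (hPconv : Convex ℝ P)
    (f : EuclideanSpace ℝ (Fin n) → ℝ) (g : EuclideanSpace ℝ (Fin n) → EuclideanSpace ℝ (Fin n))
    (hdiff : ∀ x ∈ P, HasGradientAt f (g x) x)
    (hconv : ∀ x ∈ P, ∀ y ∈ P, f y - f x ≥ ⟪g x, y - x⟫)
    (x v : ℕ → EuclideanSpace ℝ (Fin n)) (hx0 : x 0 ∈ P) (hvP : ∀ t, v t ∈ P)
    (γ : ℕ → ℝ) (hγ0 : ∀ t, 0 ≤ γ t) (hγ1 : ∀ t, γ t ≤ 1)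
    (hstep : ∀ t : ℕ, x (t + 1) = (1 - γ t) • x t + γ t • v t)
    (xstar : EuclideanSpace ℝ (Fin n)) (hxstar : xstar ∈ P) (hmin : IsMinOn f P xstar) :
    ∀ t : ℕ, 1 ≤ t →
      (f (x t) - f xstar ≥ (∏ τ ∈ Finset.Icc 1 (t - 1), (1 - γ τ)) * ⟪g xstar, x 1 - xstar⟫) ∧
      ((∀ τ : ℕ, γ τ = 2 / ((τ : ℝ) + 2)) →
        f (x t) - f xstar ≥ (2 / ((t : ℝ) * ((t : ℝ) + 1))) * ⟪g xstar, x 1 - xstar⟫) :=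
  fw_universal_lower_bound_general P hPconv f g hdiff hconv x v hx0 hvP γ hγ0 hγ1 hstep xstar hxstar
    hmin
end

section
/- Approximate Carathéodory (ℓ₂ case): Let P ⊆ ℝⁿ be a compact convex set with ℓ₂-diameter D and let x* ∈ P. For every ε > 0 there exists a point x ∈ P that is a convex combination of at most O(D²/ε²) extreme points of P (specifically, at most ⌈4D²/ε²⌉ + 1 points) with ‖x - x*‖ ≤ ε. -/
/-!
Run Frank–Wolfe on `f x = ‖x - x*‖²` over `P`, starting at an extreme point and moving with step
`γₜ = 2 / (t + 2)` towards an extreme point `v` maximizing `⟪x* - xₜ, ·⟫` on `P`. Since `x* ∈ P`,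
the linearization at `xₜ` decreases in direction `v - xₜ` at least as fast as towards `x*`,
giving `f xₜ₊₁ ≤ (1 - 2γₜ) f xₜ + γₜ² D²`, hence `f xₜ ≤ 4D² / (t + 2)`. The iterate `xₜ` is a
convex combination of the `t + 1` extreme points chosen so far, and `t = ⌈4D²/ε²⌉` suffices.
-/

open scoped RealInnerProductSpace

section ExtremePoint

variable {E : Type*} [AddCommGroup E] [Module ℝ E] [TopologicalSpace E] [T2Space E]
  [IsTopologicalAddGroup E] [ContinuousSMul ℝ E] [LocallyConvexSpace ℝ E] {s : Set E}

/-- The face where `l` is maximal is exposed, hence compact, and its extreme points (which exist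
by the Krein–Milman lemma) are extreme points of `s`. -/
theorem IsCompact.exists_mem_extremePoints_isMaxOn (hs : IsCompact s) (hne : s.Nonempty)
    (l : StrongDual ℝ E) : ∃ x ∈ s.extremePoints ℝ, IsMaxOn l s x := by
  have hexp : IsExposed ℝ s {x ∈ s | ∀ y ∈ s, l y ≤ l x} := fun _ => ⟨l, rfl⟩
  obtain ⟨z, hzs, hz⟩ := hs.exists_isMaxOn hne l.continuous.continuousOn
  obtain ⟨x, hx⟩ := (hexp.isCompact hs).extremePoints_nonempty ⟨z, hzs, fun y hy => hz hy⟩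
  exact ⟨x, hexp.isExtreme.extremePoints_subset_extremePoints hx, fun y hy => hx.1.2 y hy⟩

end ExtremePoint

section FrankWolfe

variable {E : Type*} [NormedAddCommGroup E] [InnerProductSpace ℝ E]

theorem norm_add_smul_sub_sub_sq_le {x xstar v : E} {γ : ℝ} (hγ : 0 ≤ γ)
    (hv : ⟪x - xstar, v - xstar⟫ ≤ 0) :
    ‖x + γ • (v - x) - xstar‖ ^ 2 ≤ (1 - 2 * γ) * ‖x - xstar‖ ^ 2 + γ ^ 2 * ‖v - x‖ ^ 2 := by
  have hdir : ⟪x - xstar, v - x⟫ = ⟪x - xstar, v - xstar⟫ - ‖x - xstar‖ ^ 2 := by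
    rw [← real_inner_self_eq_norm_sq, ← inner_sub_right, sub_sub_sub_cancel_right]
  rw [show x + γ • (v - x) - xstar = (x - xstar) + γ • (v - x) by abel, norm_add_sq_real,
    real_inner_smul_right, norm_smul, Real.norm_of_nonneg hγ, hdir, mul_pow]
  nlinarith [mul_nonneg hγ (neg_nonneg.2 hv)]

theorem frankWolfe_rate_succ {T h d D : ℝ} (hT : 2 ≤ T) (hh : 0 ≤ h) (hhD : h ≤ 4 * D ^ 2 / T)
    (hd : d ^ 2 ≤ D ^ 2) :
    (1 - 2 * (2 / T)) * h + (2 / T) ^ 2 * d ^ 2 ≤ 4 * D ^ 2 / (T + 1) := by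
  have hT0 : 0 < T := by linarith
  have hγ : 0 ≤ 2 / T := by positivity
  have hγ1 : 2 / T ≤ 1 := (div_le_one hT0).2 hT
  calc (1 - 2 * (2 / T)) * h + (2 / T) ^ 2 * d ^ 2
      ≤ (1 - 2 / T) * (4 * D ^ 2 / T) + (2 / T) ^ 2 * D ^ 2 := by
        refine add_le_add ?_ (by gcongr)
        nlinarith [mul_le_mul_of_nonneg_left hhD (sub_nonneg.2 hγ1), mul_nonneg hγ hh]
    _ = 4 * D ^ 2 * (T - 1) / T ^ 2 := by field_simp; ring
    _ ≤ 4 * D ^ 2 / (T + 1) := by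
        rw [div_le_div_iff₀ (by positivity) (by positivity)]
        nlinarith [sq_nonneg D]

theorem exists_extremePoints_convexHull_norm_sub_sq_le {P : Set E} (hPc : IsCompact P)
    (hPconv : Convex ℝ P) {D : ℝ} (hD : ∀ a ∈ P, ∀ b ∈ P, ‖a - b‖ ≤ D) {xstar : E}
    (hxstar : xstar ∈ P) (t : ℕ) :
    ∃ S : Finset E, (S : Set E) ⊆ P.extremePoints ℝ ∧ S.card ≤ t + 1 ∧
      ∃ x ∈ convexHull ℝ (S : Set E), ‖x - xstar‖ ^ 2 ≤ 4 * D ^ 2 / (t + 2) := by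
  classical
  have hsq : ∀ a ∈ P, ∀ b ∈ P, ‖a - b‖ ^ 2 ≤ D ^ 2 := fun a ha b hb =>
    pow_le_pow_left₀ (norm_nonneg _) (hD a ha b hb) 2
  induction t with
  | zero =>
    obtain ⟨v, hv⟩ := hPc.extremePoints_nonempty ⟨xstar, hxstar⟩
    refine ⟨{v}, by simpa using hv, by simp, v, subset_convexHull ℝ _ (by simp), ?_⟩
    have := hsq v hv.1 xstar hxstar
    push_cast
    nlinarith [sq_nonneg D]
  | succ t ih =>
    obtain ⟨S, hSP, hScard, x, hxS, hx⟩ := ih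
    have hxP : x ∈ P := convexHull_min (hSP.trans extremePoints_subset) hPconv hxS
    obtain ⟨v, hv, hvmax⟩ :=
      hPc.exists_mem_extremePoints_isMaxOn ⟨xstar, hxstar⟩ (innerSL ℝ (xstar - x))
    have hdescent : ⟪x - xstar, v - xstar⟫ ≤ 0 := by
      have : ⟪xstar - x, xstar⟫ ≤ ⟪xstar - x, v⟫ := hvmax hxstar
      rw [← neg_sub, inner_neg_left, inner_sub_right]
      linarith
    have hT : (2 : ℝ) ≤ t + 2 := by linarith [t.cast_nonneg (α := ℝ)]
    refine ⟨insert v S, ?_, (S.card_insert_le v).trans (by omega),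
      x + (2 / ((t : ℝ) + 2)) • (v - x), ?_, ?_⟩
    · rw [Finset.coe_insert]
      exact Set.insert_subset hv hSP
    · exact (convex_convexHull ℝ _).add_smul_sub_mem (convexHull_mono (by simp) hxS)
        (subset_convexHull ℝ _ (by simp)) ⟨by positivity, (div_le_one (by positivity)).2 hT⟩
    · calc _ ≤ _ := norm_add_smul_sub_sub_sq_le (by positivity) hdescent
        _ ≤ 4 * D ^ 2 / ((t + 2) + 1) :=
          frankWolfe_rate_succ hT (sq_nonneg _) hx (hsq v hv.1 x hxP)
        _ = 4 * D ^ 2 / ((t + 1 : ℕ) + 2) := by push_cast; ring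

end FrankWolfe

theorem approx_caratheodory_general {n : ℕ} (P : Set (EuclideanSpace ℝ (Fin n)))
    (hPc : IsCompact P) (hPconv : Convex ℝ P)
    (D : ℝ) (hD : ∀ a ∈ P, ∀ b ∈ P, ‖a - b‖ ≤ D)
    (xstar : EuclideanSpace ℝ (Fin n)) (hxstar : xstar ∈ P)
    (ε : ℝ) (hε : 0 < ε) :
    ∃ (S : Finset (EuclideanSpace ℝ (Fin n))) (w : EuclideanSpace ℝ (Fin n) → ℝ),
      (∀ p ∈ S, p ∈ Set.extremePoints ℝ P) ∧
      S.card ≤ Nat.ceil (4 * D ^ 2 / ε ^ 2) + 1 ∧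
      (∀ p ∈ S, 0 ≤ w p) ∧ (∑ p ∈ S, w p) = 1 ∧
      ‖(∑ p ∈ S, w p • p) - xstar‖ ≤ ε := by
  obtain ⟨S, hSP, hScard, x, hxS, hx⟩ :=
    exists_extremePoints_convexHull_norm_sub_sq_le hPc hPconv hD hxstar ⌈4 * D ^ 2 / ε ^ 2⌉₊
  obtain ⟨w, hw0, hw1, rfl⟩ := Finset.mem_convexHull'.1 hxS
  refine ⟨S, w, fun p hp => hSP hp, hScard, hw0, hw1, ?_⟩
  have hrate : 4 * D ^ 2 / (⌈4 * D ^ 2 / ε ^ 2⌉₊ + 2) ≤ ε ^ 2 := by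
    rw [div_le_iff₀ (by positivity), ← div_le_iff₀' (by positivity)]
    linarith [Nat.le_ceil (4 * D ^ 2 / ε ^ 2)]
  exact (pow_le_pow_iff_left₀ (norm_nonneg _) hε.le two_ne_zero).1 (hx.trans hrate)

/-- **Approximate Carathéodory theorem (ℓ₂ case).** For a nonempty compact convex `P ⊆ ℝⁿ` of
diameter `D`, any `x* ∈ P` and `ε > 0`, there is a convex combination of at most
`⌈4D²/ε²⌉ + 1` extreme points of `P` within distance `ε` of `x*`. -/
theorem approx_caratheodory {n : ℕ} (P : Set (EuclideanSpace ℝ (Fin n)))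
    (hPne : P.Nonempty) (hPc : IsCompact P) (hPconv : Convex ℝ P)
    (D : ℝ) (hD : ∀ a ∈ P, ∀ b ∈ P, ‖a - b‖ ≤ D)
    (xstar : EuclideanSpace ℝ (Fin n)) (hxstar : xstar ∈ P)
    (ε : ℝ) (hε : 0 < ε) :
    ∃ (S : Finset (EuclideanSpace ℝ (Fin n))) (w : EuclideanSpace ℝ (Fin n) → ℝ),
      (∀ p ∈ S, p ∈ Set.extremePoints ℝ P) ∧
      S.card ≤ Nat.ceil (4 * D ^ 2 / ε ^ 2) + 1 ∧
      (∀ p ∈ S, 0 ≤ w p) ∧ (∑ p ∈ S, w p) = 1 ∧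
      ‖(∑ p ∈ S, w p • p) - xstar‖ ≤ ε :=
  approx_caratheodory_general P hPc hPconv D hD xstar hxstar ε hε
end

section
/- Let P ⊆ ℝⁿ be compact convex, x̃ with dist(x̃, P) > √ε for some ε > 0, f(x) = ‖x - x̃‖², and suppose x_t ∈ P satisfies max_{v∈P}⟪∇f(x_t), x_t - v⟫ ≤ ε. Then the inequality min_{v∈P}⟪∇f(x_t), v⟫ ≤ ⟪∇f(x_t), x⟫, valid for all x ∈ P, is strictly violated by x̃, i.e., ⟪∇f(x_t), x̃⟫ < min_{v∈P}⟪∇f(x_t), v⟫. -/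
open scoped RealInnerProductSpace

/-! If `x̃` is `√ε`-far from `P`, then `‖x_t - x̃‖² > ε` for every `x_t ∈ P`. With
`g = ∇f(x_t) = 2 (x_t - x̃)` we have `⟪g, v - x̃⟫ = ⟪g, x_t - x̃⟫ - ⟪g, x_t - v⟫ ≥ 2‖x_t - x̃‖² - ε > 0`
for every `v ∈ P`, the second term being bounded by the Frank-Wolfe gap. -/

theorem lt_sq_norm_sub_of_sqrt_lt_infDist {E : Type*} [SeminormedAddCommGroup E]
    {s : Set E} {x y : E} {ε : ℝ} (hfar : √ε < Metric.infDist y s) (hx : x ∈ s) :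
    ε < ‖x - y‖ ^ 2 := by
  refine Real.lt_sq_of_sqrt_lt (hfar.trans_le ?_)
  rw [← dist_eq_norm, dist_comm]
  exact Metric.infDist_le_dist_of_mem hx

theorem inner_two_smul_sub_lt_of_inner_le {E : Type*} [NormedAddCommGroup E]
    [InnerProductSpace ℝ E] {x y v : E} {ε : ℝ}
    (hgap : ⟪(2 : ℝ) • (x - y), x - v⟫ ≤ ε) (hε : ε < 2 * ‖x - y‖ ^ 2) :
    ⟪(2 : ℝ) • (x - y), y⟫ < ⟪(2 : ℝ) • (x - y), v⟫ := by
  have hself : ⟪(2 : ℝ) • (x - y), x - y⟫ = 2 * ‖x - y‖ ^ 2 := by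
    rw [real_inner_smul_left, real_inner_self_eq_norm_sq]
  have hsplit : x - v = (x - y) - (v - y) := by abel
  rw [hsplit, inner_sub_right, hself] at hgap
  rw [← sub_pos, ← inner_sub_right]
  linarith

theorem fw_approx_separating_hyperplane_general {n : ℕ} (P : Set (EuclideanSpace ℝ (Fin n)))
    (ε : ℝ)
    (xtilde : EuclideanSpace ℝ (Fin n)) (hfar : Real.sqrt ε < Metric.infDist xtilde P)
    (xt : EuclideanSpace ℝ (Fin n)) (hxt : xt ∈ P)
    (hgap : ∀ v ∈ P, ⟪(2 : ℝ) • (xt - xtilde), xt - v⟫ ≤ ε) :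
    ∀ v ∈ P, ⟪(2 : ℝ) • (xt - xtilde), xtilde⟫ < ⟪(2 : ℝ) • (xt - xtilde), v⟫ := by
  intro v hv
  have hsep : ε < ‖xt - xtilde‖ ^ 2 := lt_sq_norm_sub_of_sqrt_lt_infDist hfar hxt
  exact inner_two_smul_sub_lt_of_inner_le (hgap v hv) (by linarith [sq_nonneg ‖xt - xtilde‖])

/-- **Approximate separating hyperplane.** If `x̃` is `√ε`-far from the nonempty compact convex
set `P` and `x_t ∈ P` has Frank-Wolfe gap at most `ε` for `f x = ‖x - x̃‖²` (gradient
`∇f x_t = 2 (x_t - x̃)`), then the valid inequality `min_{v∈P} ⟪∇f x_t, v⟫ ≤ ⟪∇f x_t, x⟫`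
is strictly violated by `x̃`: `⟪∇f x_t, x̃⟫ < ⟪∇f x_t, v⟫` for all `v ∈ P`. -/
theorem fw_approx_separating_hyperplane {n : ℕ} (P : Set (EuclideanSpace ℝ (Fin n)))
    (hPne : P.Nonempty) (hPc : IsCompact P) (hPconv : Convex ℝ P)
    (ε : ℝ) (hε : 0 < ε)
    (xtilde : EuclideanSpace ℝ (Fin n)) (hfar : Real.sqrt ε < Metric.infDist xtilde P)
    (xt : EuclideanSpace ℝ (Fin n)) (hxt : xt ∈ P)
    (hgap : ∀ v ∈ P, ⟪(2 : ℝ) • (xt - xtilde), xt - v⟫ ≤ ε) :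
    ∀ v ∈ P, ⟪(2 : ℝ) • (xt - xtilde), xtilde⟫ < ⟪(2 : ℝ) • (xt - xtilde), v⟫ :=
  fw_approx_separating_hyperplane_general P ε xtilde hfar xt hxt hgap
end
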